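/- Let G be a finite p-group of order p^n with n ≥ 2 having dense CD-subgroups. Then every subgroup of G of order p^2 contains the center Z(G). -/
import Mathlib


open Pointwise

/-- Chermak–Delgado measure of a subgroup. -/
noncomputable def mCD (G : Type*) [Group G] (H : Subgroup G) : ℕ :=
  Nat.card H * Nat.card (Subgroup.centralizer (H : Set G))

/-- Maximal Chermak–Delgado measure. -/
noncomputable def mStar (G : Type*) [Group G] : ℕ :=
  sSup (Set.range (mCD G))

/-- Chermak–Delgado lattice (as a set of subgroups). -/
def CD (G : Type*) [Group G] : Set (Subgroup G) :=
  {H | mCD G H = mStar G}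

/-- A group has dense CD-subgroups if for all subgroups H < K with H not
maximal in K, there exists X in CD(G) with H < X < K. -/
def DenseCD (G : Type*) [Group G] : Prop :=
  ∀ H K : Subgroup G, H < K → (∃ L : Subgroup G, H < L ∧ L < K) →
    ∃ X ∈ CD G, H < X ∧ X < K

lemma mCD_le_mStar (G : Type*) [Group G] [Finite G] (H : Subgroup G) :
    mCD G H ≤ mStar G :=
  le_csSup (Set.finite_range _).bddAbove ⟨H, rfl⟩

lemma le_ccH (G : Type*) [Group G] (H : Subgroup G) :
    H ≤ Subgroup.centralizer ((Subgroup.centralizer (H : Set G) : Subgroup G) : Set G) := by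
  have := Subgroup.closure_le_centralizer_centralizer (H : Set G)
  rwa [Subgroup.closure_eq] at this

lemma center_le_of_mem_CD (G : Type*) [Group G] [Finite G] {X : Subgroup G}
    (hX : X ∈ CD G) : Subgroup.center G ≤ X := by
  set C := Subgroup.centralizer (X : Set G) with hC
  have hle : X ≤ Subgroup.centralizer (C : Set G) := le_ccH G X
  have h1 : mCD G C ≤ mStar G := mCD_le_mStar G C
  have h2 : mCD G X ≤ mCD G C := by
    unfold mCD
    rw [mul_comm]
    exact Nat.mul_le_mul_left _ (Subgroup.card_le_of_le hle)
  have heq : mCD G C = mStar G := le_antisymm h1 (hX ▸ h2)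
  -- from mCD X = mCD C and positivity, card (centralizer C) = card X
  have hpos : 0 < Nat.card C := Nat.card_pos
  have hcards : Nat.card X * Nat.card C
      = Nat.card C * Nat.card (Subgroup.centralizer (C : Set G)) := by
    have := hX.trans heq.symm
    unfold mCD at this
    exact this
  have hcard : Nat.card (Subgroup.centralizer (C : Set G)) = Nat.card X := by
    rw [mul_comm (Nat.card X)] at hcards
    exact (Nat.eq_of_mul_eq_mul_left hpos hcards).symm
  have hXeq : X = Subgroup.centralizer (C : Set G) :=
    Subgroup.eq_of_le_of_card_ge hle hcard.le
  rw [hXeq]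
  exact Subgroup.center_le_centralizer _

theorem stmt9 (G : Type*) [Group G] [Finite G] (p n : ℕ) (hp : p.Prime) (hn : 2 ≤ n)
    (hcard : Nat.card G = p ^ n) (hd : DenseCD G)
    (H : Subgroup G) (hH : Nat.card H = p ^ 2) :
    Subgroup.center G ≤ H := by
  haveI : Fact p.Prime := ⟨hp⟩
  -- find a subgroup of H of order p
  obtain ⟨K, hK⟩ := Sylow.exists_subgroup_card_pow_prime (G := ↥H) p (n := 1)
    (by rw [hH, pow_one]; exact dvd_pow_self p two_ne_zero)
  set L := K.map H.subtype with hLdef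
  have hLcard : Nat.card L = p := by
    have : Nat.card L = Nat.card K :=
      Nat.card_congr (K.equivMapOfInjective H.subtype H.subtype_injective).symm
    rw [this, hK, pow_one]
  have hLH : L ≤ H := Subgroup.map_subtype_le K
  have hbotL : (⊥ : Subgroup G) < L := by
    rw [bot_lt_iff_ne_bot]
    intro h
    rw [h, Subgroup.card_bot] at hLcard
    exact hp.one_lt.ne hLcard
  have hLltH : L < H := lt_of_le_of_ne hLH (by
    intro h
    rw [h, hH] at hLcard
    have := hp.one_lt
    nlinarith [hp.two_le])
  obtain ⟨X, hXCD, hX1, hX2⟩ := hd ⊥ H (hbotL.trans hLltH) ⟨L, hbotL, hLltH⟩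
  exact (center_le_of_mem_CD G hXCD).trans hX2.le
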